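/- Let n be a positive integer and let v > −1 be a real number. Then ∑_{k=0}^{⌊n/2⌋} (−1)^k · (n/(n−k)) · C(n−k, k) · 2^{−4k} · B(2k+v, (2k+v)/2) = B(2n+v, (2n+v)/2) · B(v, v/2) · 2^{1−2n} · B(n+v, v/2)^{−1}. -/

import Mathlib

/-!
Put `a = v / 2` and `ρ(x) = Γ(x + 1/2) / Γ(x + 1)`. Legendre's duplication formula gives
`B(2x, x) = 2^(2x) ρ(x) / √π`, so after dividing both sides by `2^v / √π` the left side becomes
`S(a, n) = ∑ₖ c(n, k) 4^(-k) ρ(k + a)`, with `c(n, k) = (-1)^k n/(n-k) C(n-k, k)` the coefficients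
of Waring's formula, and the right side becomes
`F(a, n) = 2 Γ(2a+1) Γ(n+a+1/2) / (Γ(a+1) Γ(n+2a+1))`.
The recurrence `c(n+2, k+1) = c(n+1, k+1) - c(n, k)` yields `S(a, n+2) = S(a, n+1) - S(a+1, n) / 4`,
the functional equation of `Γ` shows that `F` satisfies the same recurrence, and `S = F` for
`n = 1, 2`; induction on `n`, for all `a > -1/2` at once, concludes.
-/

open Real

/-- Generalized binomial coefficient `B(a,b) = Γ(a+1)/(Γ(b+1)·Γ(a−b+1))`. -/
noncomputable def gbinom (a b : ℝ) : ℝ :=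
  Real.Gamma (a + 1) / (Real.Gamma (b + 1) * Real.Gamma (a - b + 1))

open Finset

/-- The coefficients of Waring's formula `x^n + y^n = ∑ₖ c(n, k) (x y)^k (x + y)^(n - 2k)`.
At `n = 0` the junk value `0 / 0 = 0` replaces Waring's `c(0, 0) = 2`, which is why the
recurrence `waringCoeff_add_two_succ` needs `m ≠ 0`. -/
noncomputable def waringCoeff (n k : ℕ) : ℝ :=
  (-1 : ℝ) ^ k * ((n : ℝ) / ((n : ℝ) - (k : ℝ))) * ((n - k).choose k : ℝ)

theorem waringCoeff_eq_zero {n k : ℕ} (h : n < 2 * k) : waringCoeff n k = 0 := by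
  rw [waringCoeff, Nat.choose_eq_zero_of_lt (by omega), Nat.cast_zero, mul_zero]

theorem waringCoeff_zero_right {n : ℕ} (hn : n ≠ 0) : waringCoeff n 0 = 1 := by
  simp [waringCoeff, hn]

theorem waringCoeff_add_left (j k : ℕ) :
    waringCoeff (j + k) k = (-1 : ℝ) ^ k * ((j + k) / j) * (j.choose k : ℝ) := by
  simp [waringCoeff]

theorem waringCoeff_add_two_succ {m : ℕ} (hm : m ≠ 0) (k : ℕ) :
    waringCoeff (m + 2) (k + 1) = waringCoeff (m + 1) (k + 1) - waringCoeff m k := by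
  rcases lt_or_ge m (2 * k) with hmk | hkm
  · rw [waringCoeff_eq_zero (by omega), waringCoeff_eq_zero (by omega),
      waringCoeff_eq_zero (by omega), sub_zero]
  obtain ⟨j, rfl⟩ : ∃ j, m = j + 1 + k := ⟨m - k - 1, by omega⟩
  have pascal : ((j + 2).choose (k + 1) : ℝ) = (j + 1).choose k + (j + 1).choose (k + 1) := by
    exact_mod_cast Nat.choose_succ_succ (j + 1) k
  have absorb : ((j + 1).choose (k + 1) : ℝ) * (k + 1) = (j + 1).choose k * (j + 1 - k) := by
    have := congrArg (Nat.cast (R := ℝ)) (Nat.choose_succ_right_eq (j + 1) k)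
    push_cast [Nat.cast_sub (show k ≤ j + 1 by omega)] at this
    linear_combination this
  rw [show j + 1 + k + 2 = (j + 2) + (k + 1) by omega,
    show j + 1 + k + 1 = (j + 1) + (k + 1) by omega, waringCoeff_add_left, waringCoeff_add_left,
    waringCoeff_add_left]
  push_cast
  field_simp
  linear_combination
    (-1 : ℝ) ^ k * (-(j + k + 3 : ℝ) * (j + 1)) * pascal + (-1 : ℝ) ^ k * absorb

noncomputable def waringSum (n : ℕ) (g : ℕ → ℝ) : ℝ :=
  ∑ k ∈ range (n + 1), waringCoeff n k * g k

theorem waringSum_eq_sum_range {n N : ℕ} (hN : n / 2 < N) (g : ℕ → ℝ) :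
    waringSum n g = ∑ k ∈ range N, waringCoeff n k * g k := by
  have vanish {M : ℕ} (hM : n / 2 < M) : ∑ k ∈ range M, waringCoeff n k * g k =
      ∑ k ∈ range (n / 2 + 1), waringCoeff n k * g k :=
    (sum_subset (range_subset_range.mpr (by omega)) fun k _ hk => by
      rw [waringCoeff_eq_zero (by simp at hk; omega), zero_mul]).symm
  rw [waringSum, vanish (by omega), vanish hN]

theorem waringSum_add_two {m : ℕ} (hm : m ≠ 0) (g : ℕ → ℝ) :
    waringSum (m + 2) g = waringSum (m + 1) g - waringSum m (fun k => g (k + 1)) := by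
  rw [waringSum, waringSum_eq_sum_range (N := m + 3) (by omega),
    waringSum_eq_sum_range (N := m + 2) (by omega), sum_range_succ', sum_range_succ' _ (m + 2)]
  simp only [waringCoeff_add_two_succ hm, waringCoeff_zero_right (Nat.succ_ne_zero _), sub_mul,
    sum_sub_distrib]
  ring

theorem waringSum_one (g : ℕ → ℝ) : waringSum 1 g = g 0 := by
  simp [waringSum, sum_range_succ, waringCoeff]

theorem waringSum_two (g : ℕ → ℝ) : waringSum 2 g = g 0 - 2 * g 1 := by
  have : waringCoeff 2 1 = -2 := by norm_num [waringCoeff]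
  rw [waringSum, sum_range_succ, sum_range_succ, sum_range_one, waringCoeff_zero_right two_ne_zero,
    this, waringCoeff_eq_zero (by norm_num)]
  ring

theorem waringSum_const_mul (n : ℕ) (c : ℝ) (g : ℕ → ℝ) :
    waringSum n (fun k => c * g k) = c * waringSum n g := by
  simp only [waringSum, mul_sum, mul_left_comm]

theorem Real.Gamma_eq_mul_Gamma_of_eq_add_one {s t : ℝ} (h : s = t + 1) (ht : t ≠ 0) :
    Gamma s = t * Gamma t :=
  h ▸ Gamma_add_one ht

noncomputable def gammaHalfRatio (x : ℝ) : ℝ :=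
  Gamma (x + 1 / 2) / Gamma (x + 1)

theorem gbinom_two_mul_self (x : ℝ) : gbinom (2 * x) x = 2 ^ (2 * x) / √π * gammaHalfRatio x := by
  have dup := Gamma_mul_Gamma_add_half (x + 1 / 2)
  rw [show x + 1 / 2 + 1 / 2 = x + 1 by ring, show 2 * (x + 1 / 2) = 2 * x + 1 by ring,
    show 1 - (2 * x + 1) = -(2 * x) by ring, rpow_neg zero_le_two] at dup
  have hπ : √π ≠ 0 := (sqrt_pos.mpr pi_pos).ne'
  have h2 : (2 : ℝ) ^ (2 * x) ≠ 0 := (rpow_pos_of_pos two_pos _).ne'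
  have hΓ : Gamma (2 * x + 1) = 2 ^ (2 * x) / √π * Gamma (x + 1 / 2) * Gamma (x + 1) := by
    field_simp at dup ⊢
    linear_combination -dup
  rw [gbinom, gammaHalfRatio, show 2 * x - x + 1 = x + 1 by ring, hΓ]
  rcases eq_or_ne (Gamma (x + 1)) 0 with h | h
  · simp [h]
  · rw [mul_div_mul_right _ _ h, mul_div_assoc]

noncomputable def waringClosedForm (a x : ℝ) : ℝ :=
  2 * Gamma (2 * a + 1) * Gamma (x + a + 1 / 2) / (Gamma (a + 1) * Gamma (x + 2 * a + 1))

theorem waringClosedForm_zero {a : ℝ} (ha : -1 / 2 < a) :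
    waringClosedForm a 0 = 2 * gammaHalfRatio a := by
  have : Gamma (2 * a + 1) ≠ 0 := (Gamma_pos_of_pos (by linarith)).ne'
  simp only [waringClosedForm, gammaHalfRatio, zero_add]
  field_simp

theorem waringClosedForm_one {a : ℝ} (ha : -1 / 2 < a) :
    waringClosedForm a 1 = gammaHalfRatio a := by
  have h₁ : Gamma (1 + a + 1 / 2) = (a + 1 / 2) * Gamma (a + 1 / 2) :=
    Gamma_eq_mul_Gamma_of_eq_add_one (by ring) (by linarith)
  have h₂ : Gamma (1 + 2 * a + 1) = (2 * a + 1) * Gamma (2 * a + 1) :=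
    Gamma_eq_mul_Gamma_of_eq_add_one (by ring) (by linarith)
  have : Gamma (2 * a + 1) ≠ 0 := (Gamma_pos_of_pos (by linarith)).ne'
  have : 2 * a + 1 ≠ 0 := by linarith
  rw [waringClosedForm, gammaHalfRatio, h₁, h₂]
  field_simp

theorem waringClosedForm_add_two {a x : ℝ} (ha : -1 / 2 < a) (hx : 0 ≤ x) :
    waringClosedForm a (x + 2) = waringClosedForm a (x + 1) - 4⁻¹ * waringClosedForm (a + 1) x := by
  have h₁ : Gamma (x + 2 + a + 1 / 2) = (x + 1 + a + 1 / 2) * Gamma (x + 1 + a + 1 / 2) :=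
    Gamma_eq_mul_Gamma_of_eq_add_one (by ring) (by linarith)
  have h₂ : Gamma (x + 2 + 2 * a + 1) = (x + 1 + 2 * a + 1) * Gamma (x + 1 + 2 * a + 1) :=
    Gamma_eq_mul_Gamma_of_eq_add_one (by ring) (by linarith)
  have h₃ : Gamma (x + 2 * (a + 1) + 1) = (x + 1 + 2 * a + 1) * Gamma (x + 1 + 2 * a + 1) :=
    Gamma_eq_mul_Gamma_of_eq_add_one (by ring) (by linarith)
  have h₄ : Gamma (2 * (a + 1) + 1) = (2 * a + 2) * (2 * a + 1) * Gamma (2 * a + 1) := by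
    rw [Gamma_eq_mul_Gamma_of_eq_add_one (by ring) (by linarith : 2 * a + 2 ≠ 0),
      Gamma_eq_mul_Gamma_of_eq_add_one (by ring) (by linarith : 2 * a + 1 ≠ 0), mul_assoc]
  have h₅ : Gamma (a + 1 + 1) = (a + 1) * Gamma (a + 1) := Gamma_add_one (by linarith)
  have h₆ : x + (a + 1) + 1 / 2 = x + 1 + a + 1 / 2 := by ring
  have : Gamma (a + 1) ≠ 0 := (Gamma_pos_of_pos (by linarith)).ne'
  have : Gamma (x + 1 + 2 * a + 1) ≠ 0 := (Gamma_pos_of_pos (by linarith)).ne'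
  have : a + 1 ≠ 0 := by linarith
  have : x + 1 + 2 * a + 1 ≠ 0 := by linarith
  rw [waringClosedForm, waringClosedForm, waringClosedForm, h₁, h₂, h₃, h₄, h₅, h₆]
  field_simp
  ring

theorem waringSum_eq_waringClosedForm :
    ∀ n : ℕ, n ≠ 0 → ∀ a : ℝ, -1 / 2 < a →
      waringSum n (fun k => (4 : ℝ)⁻¹ ^ k * gammaHalfRatio (k + a)) = waringClosedForm a n
  | 1, _, a, ha => by simp [waringSum_one, waringClosedForm_one ha]
  | 2, _, a, ha => by
    have h := waringClosedForm_add_two ha le_rfl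
    rw [zero_add, zero_add, waringClosedForm_one ha, waringClosedForm_zero (by linarith)] at h
    rw [waringSum_two]
    push_cast
    rw [h, zero_add, add_comm 1 a]
    ring
  | m + 3, _, a, ha => by
    have shift : (fun k : ℕ => (4 : ℝ)⁻¹ ^ (k + 1) * gammaHalfRatio (↑(k + 1) + a)) =
        fun k : ℕ => 4⁻¹ * ((4 : ℝ)⁻¹ ^ k * gammaHalfRatio (k + (a + 1))) := by
      ext k
      rw [pow_succ, Nat.cast_succ, add_right_comm, add_assoc]
      ring
    rw [waringSum_add_two (by omega), shift, waringSum_const_mul,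
      waringSum_eq_waringClosedForm (m + 2) (by omega) a ha,
      waringSum_eq_waringClosedForm (m + 1) (by omega) (a + 1) (by linarith)]
    push_cast
    rw [show (m : ℝ) + 3 = m + 1 + 2 by ring, show (m : ℝ) + 2 = m + 1 + 1 by ring,
      waringClosedForm_add_two ha (by positivity)]

theorem two_rpow_neg_four_mul_mul_gbinom (k : ℕ) (v : ℝ) :
    (2 : ℝ) ^ (-4 * (k : ℝ)) * gbinom (2 * (k : ℝ) + v) ((2 * (k : ℝ) + v) / 2) =
      2 ^ v / √π * ((4 : ℝ)⁻¹ ^ k * gammaHalfRatio (k + v / 2)) := by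
  have hpow : (2 : ℝ) ^ (-4 * (k : ℝ)) * 2 ^ (2 * (k + v / 2)) = 2 ^ v * (4 : ℝ)⁻¹ ^ k := by
    rw [← rpow_add two_pos, show -4 * (k : ℝ) + 2 * (k + v / 2) = v + -2 * k by ring,
      rpow_add two_pos, rpow_mul_natCast zero_le_two]
    norm_num
  rw [show 2 * (k : ℝ) + v = 2 * (k + v / 2) by ring, mul_div_cancel_left₀ _ two_ne_zero,
    gbinom_two_mul_self]
  linear_combination gammaHalfRatio (k + v / 2) / √π * hpow

theorem gbinom_ratio_eq_waringClosedForm {x v : ℝ} (hx : 0 ≤ x) (hv : -1 < v) :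
    gbinom (2 * x + v) ((2 * x + v) / 2) * gbinom v (v / 2) * (2 : ℝ) ^ (1 - 2 * x) *
        (gbinom (x + v) (v / 2))⁻¹ = 2 ^ v / √π * waringClosedForm (v / 2) x := by
  have hpow : (2 : ℝ) ^ (2 * (x + v / 2)) * 2 ^ (1 - 2 * x) = 2 * 2 ^ v := by
    rw [← rpow_add two_pos, show 2 * (x + v / 2) + (1 - 2 * x) = 1 + v by ring,
      rpow_add two_pos, rpow_one]
  rw [show 2 * x + v = 2 * (x + v / 2) by ring, mul_div_cancel_left₀ _ two_ne_zero,
    gbinom_two_mul_self]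
  have h₁ : Gamma (v / 2 + 1) ≠ 0 := (Gamma_pos_of_pos (by linarith)).ne'
  have h₂ : Gamma (x + v / 2 + 1) ≠ 0 := (Gamma_pos_of_pos (by linarith)).ne'
  have h₃ : Gamma (x + v + 1) ≠ 0 := (Gamma_pos_of_pos (by linarith)).ne'
  simp only [gbinom, waringClosedForm, gammaHalfRatio, show v - v / 2 = v / 2 by ring,
    show x + v - v / 2 = x + v / 2 by ring, show 2 * (v / 2) = v by ring]
  generalize Gamma (v / 2 + 1) = A at h₁ ⊢
  generalize Gamma (x + v / 2 + 1) = B at h₂ ⊢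
  generalize Gamma (x + v + 1) = C at h₃ ⊢
  generalize Gamma (v + 1) = D
  generalize Gamma (x + v / 2 + 1 / 2) = E
  generalize (2 : ℝ) ^ (2 * (x + v / 2)) = P at hpow ⊢
  generalize (2 : ℝ) ^ (1 - 2 * x) = Q at hpow ⊢
  field_simp
  linear_combination D * E * hpow

theorem waring_combinatorial_identity (n : ℕ) (hn : 0 < n) (v : ℝ) (hv : v > -1) :
    ∑ k ∈ Finset.range (n / 2 + 1),
      (-1 : ℝ) ^ k * ((n : ℝ) / ((n : ℝ) - (k : ℝ))) * ((n - k).choose k : ℝ) *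
        (2 : ℝ) ^ (-4 * (k : ℝ)) * gbinom (2 * (k : ℝ) + v) ((2 * (k : ℝ) + v) / 2)
    = gbinom (2 * (n : ℝ) + v) ((2 * (n : ℝ) + v) / 2) * gbinom v (v / 2) *
        (2 : ℝ) ^ (1 - 2 * (n : ℝ)) * (gbinom ((n : ℝ) + v) (v / 2))⁻¹ := by
  calc _ = ∑ k ∈ range (n / 2 + 1),
          waringCoeff n k * (2 ^ v / √π * ((4 : ℝ)⁻¹ ^ k * gammaHalfRatio (k + v / 2))) :=
        sum_congr rfl fun k _ => by
          rw [← two_rpow_neg_four_mul_mul_gbinom, ← mul_assoc, waringCoeff]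
    _ = 2 ^ v / √π * waringSum n (fun k => (4 : ℝ)⁻¹ ^ k * gammaHalfRatio (k + v / 2)) := by
        rw [← waringSum_const_mul, waringSum_eq_sum_range (N := n / 2 + 1) (by omega)]
    _ = 2 ^ v / √π * waringClosedForm (v / 2) n := by
        rw [waringSum_eq_waringClosedForm n hn.ne' (v / 2) (by linarith)]
    _ = _ := (gbinom_ratio_eq_waringClosedForm n.cast_nonneg hv).symm
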